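/- Let P ⊆ ℝ₊ × ℝ₊ be a finite Pareto frontier (an antichain under weak dominance, listed in strictly increasing first coordinate and strictly decreasing second coordinate as p₁, ..., pₙ). For any ε > 0 there exists a subset Q ⊆ P of size at most ⌈log_{1+ε}(p_n.1 / p₁.1)⌉ + 1 such that every element of P is (ε,0)-dominated by some element of Q, i.e., for each p ∈ P there is q ∈ Q with q.1 ≤ (1+ε)·p.1 and q.2 ≤ p.2. -/

import Mathlib

/-!
Bucket the points by `k i = ⌈log_{1+ε}(p_i.1 / p_1.1)⌉`, an integer in `[0, k n]` that is
monotone in `i`, and keep the last point of every bucket. Two points in one bucket have first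
coordinates within a factor `1 + ε`, and the kept point, coming later, has the smaller second
coordinate.
-/

open Finset Real

theorem Finset.exists_card_le_forall_exists_le_key_eq {ι β : Type*} [Fintype ι] [LinearOrder ι]
    (key : ι → β) (S : Finset β) (hS : ∀ i, key i ∈ S) :
    ∃ Q : Finset ι, Q.card ≤ S.card ∧ ∀ i, ∃ j ∈ Q, key j = key i ∧ i ≤ j := by
  classical
  refine ⟨univ.filter fun j => ∀ i, key i = key j → i ≤ j, ?_, fun i => ?_⟩
  · refine card_le_card_of_injOn key (fun j _ => hS j) fun j hj j' hj' hkey => ?_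
    simp only [coe_filter, mem_univ, true_and, Set.mem_ofPred_eq] at hj hj'
    exact le_antisymm (hj' j hkey) (hj j' hkey.symm)
  · have hfiber : (univ.filter fun j => key j = key i).Nonempty := ⟨i, by simp⟩
    obtain ⟨hmem, hmax⟩ := (univ.filter fun j => key j = key i).isGreatest_max' hfiber
    simp only [coe_filter, mem_univ, true_and, Set.mem_ofPred_eq] at hmem
    refine ⟨_, ?_, hmem, hmax (by simp)⟩
    simp only [mem_filter, mem_univ, true_and, hmem]
    exact fun j hj => hmax (by simpa [hmem] using hj)

theorem Real.lt_mul_of_ceil_logb_eq {c x y : ℝ} (hc : 1 < c) (hx : 0 < x) (hy : 0 < y)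
    (h : ⌈logb c x⌉ = ⌈logb c y⌉) : x < c * y := by
  have hx_le : x ≤ c ^ (⌈logb c y⌉ : ℝ) :=
    (logb_le_iff_le_rpow hc hx).mp (h ▸ Int.le_ceil _)
  have hy_gt : c ^ ((⌈logb c y⌉ : ℝ) - 1) < y :=
    (lt_logb_iff_rpow_lt hc hy).mp (by linarith [Int.ceil_lt_add_one (logb c y)])
  calc x ≤ c ^ (⌈logb c y⌉ : ℝ) := hx_le
    _ = c * c ^ ((⌈logb c y⌉ : ℝ) - 1) := by rw [rpow_sub_one (by positivity)]; field_simp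
    _ < c * y := by gcongr

theorem exists_small_approx_subset_general
    (n : ℕ) (p : Fin (n + 1) → ℝ × ℝ)
    (hpos1 : ∀ i, 0 < (p i).1)
    (hmono : StrictMono fun i => (p i).1)
    (hanti : StrictAnti fun i => (p i).2)
    (ε : ℝ) (hε : 0 < ε) :
    ∃ Q : Finset (Fin (n + 1)),
      (Q.card : ℤ) ≤ ⌈Real.logb (1 + ε) ((p (Fin.last n)).1 / (p 0).1)⌉ + 1 ∧
      ∀ i, ∃ j ∈ Q, (p j).1 ≤ (1 + ε) * (p i).1 ∧ (p j).2 ≤ (p i).2 := by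
  have hc : 1 < 1 + ε := by linarith
  set key : Fin (n + 1) → ℤ := fun i => ⌈logb (1 + ε) ((p i).1 / (p 0).1)⌉
  have hkey_mono : Monotone key := fun i j hij =>
    Int.ceil_mono <| logb_le_logb_of_le hc (div_pos (hpos1 i) (hpos1 0)) <|
      div_le_div_of_nonneg_right (hmono.monotone hij) (hpos1 0).le
  have hkey_zero : key 0 = 0 := by simp [key, div_self (hpos1 0).ne']
  obtain ⟨Q, hcard, hQ⟩ := exists_card_le_forall_exists_le_key_eq key (Icc 0 (key (Fin.last n)))
    fun i => mem_Icc.2 ⟨hkey_zero ▸ hkey_mono (Fin.zero_le i), hkey_mono (Fin.le_last i)⟩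
  refine ⟨Q, ?_, fun i => ?_⟩
  · have hlast : 0 ≤ key (Fin.last n) := hkey_zero ▸ hkey_mono (Fin.zero_le _)
    calc (Q.card : ℤ) ≤ (Icc 0 (key (Fin.last n))).card := by exact_mod_cast hcard
      _ = key (Fin.last n) + 1 := by rw [Int.card_Icc, Int.toNat_of_nonneg (by omega)]; ring
  · obtain ⟨j, hjQ, hkey, hij⟩ := hQ i
    have hratio := lt_mul_of_ceil_logb_eq hc (div_pos (hpos1 j) (hpos1 0))
      (div_pos (hpos1 i) (hpos1 0)) hkey
    rw [← mul_div_assoc, div_lt_div_iff_of_pos_right (hpos1 0)] at hratio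
    exact ⟨j, hjQ, hratio.le, hanti.antitone hij⟩

/-- a finite Pareto frontier admits an (ε,0)-approximating
subset of logarithmic size. -/
theorem exists_small_approx_subset
    (n : ℕ) (p : Fin (n + 1) → ℝ × ℝ)
    (hpos1 : ∀ i, 0 < (p i).1) (hpos2 : ∀ i, 0 < (p i).2)
    (hmono : StrictMono fun i => (p i).1)
    (hanti : StrictAnti fun i => (p i).2)
    (ε : ℝ) (hε : 0 < ε) :
    ∃ Q : Finset (Fin (n + 1)),
      (Q.card : ℤ) ≤ ⌈Real.logb (1 + ε) ((p (Fin.last n)).1 / (p 0).1)⌉ + 1 ∧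
      ∀ i, ∃ j ∈ Q, (p j).1 ≤ (1 + ε) * (p i).1 ∧ (p j).2 ≤ (p i).2 :=
  exists_small_approx_subset_general n p hpos1 hmono hanti ε hε
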